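/- Every independent extension-set 𝕊 with 𝕊 ⊆ 𝕊⁺ belongs to the c-signature of stable semantics, i.e., there exists a stb-compact AF F with stb(F) = 𝕊. -/

import Mathlib

structure AF where
  A : Finset ℕ
  R : Set (ℕ × ℕ)
  R_sub : ∀ p ∈ R, p.1 ∈ A ∧ p.2 ∈ A

namespace AF

def cf (F : AF) : Set (Set ℕ) :=
  {S | S ⊆ ↑F.A ∧ ∀ a ∈ S, ∀ b ∈ S, (a, b) ∉ F.R}

def defends (F : AF) (S : Set ℕ) (a : ℕ) : Prop :=
  ∀ b, (b, a) ∈ F.R → ∃ s ∈ S, (s, b) ∈ F.R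

def adm (F : AF) : Set (Set ℕ) :=
  {S | S ∈ F.cf ∧ ∀ a ∈ S, F.defends S a}

def rng (F : AF) (S : Set ℕ) : Set ℕ :=
  S ∪ {b | ∃ s ∈ S, (s, b) ∈ F.R}

def naive (F : AF) : Set (Set ℕ) :=
  {S | S ∈ F.cf ∧ ∀ T ∈ F.cf, S ⊆ T → S = T}

def stb (F : AF) : Set (Set ℕ) :=
  {S | S ∈ F.cf ∧ ∀ a ∈ F.A, a ∉ S → ∃ s ∈ S, (s, a) ∈ F.R}

def pref (F : AF) : Set (Set ℕ) :=
  {S | S ∈ F.adm ∧ ∀ T ∈ F.adm, S ⊆ T → S = T}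

def stage (F : AF) : Set (Set ℕ) :=
  {S | S ∈ F.cf ∧ ¬ ∃ T ∈ F.cf, F.rng S ⊂ F.rng T}

def sem (F : AF) : Set (Set ℕ) :=
  {S | S ∈ F.adm ∧ ¬ ∃ T ∈ F.adm, F.rng S ⊂ F.rng T}

end AF

abbrev Semantics := AF → Set (Set ℕ)

def StandardSemantics : Set Semantics :=
  {AF.naive, AF.stb, AF.stage, AF.pref, AF.sem}

def AFCompact (σ : Semantics) (F : AF) : Prop :=
  ∀ a ∈ F.A, ∃ S ∈ σ F, a ∈ S

def CAF (σ : Semantics) : Set AF := {F | AFCompact σ F}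

def ArgS (𝕊 : Set (Set ℕ)) : Set ℕ := ⋃₀ 𝕊

def PairsS (𝕊 : Set (Set ℕ)) : Set (ℕ × ℕ) :=
  {p | ∃ S ∈ 𝕊, p.1 ∈ S ∧ p.2 ∈ S}

def IsExtensionSet (𝕊 : Set (Set ℕ)) : Prop := (ArgS 𝕊).Finite

def AFStep (F : AF) (a b : ℕ) : Prop := (a, b) ∈ F.R ∨ (b, a) ∈ F.R

def AFConnected (F : AF) : Prop :=
  ∀ a ∈ F.A, ∀ b ∈ F.A, Relation.ReflTransGen (AFStep F) a b

def sameComp (F : AF) (a b : ℕ) : Prop := Relation.ReflTransGen (AFStep F) a b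

def comps (F : AF) : Set (Set ℕ) :=
  {K | ∃ a ∈ F.A, K = {b ∈ (↑F.A : Set ℕ) | sameComp F a b}}

def nopairs (𝕊 : Set (Set ℕ)) (a b : ℕ) : Prop :=
  a ∈ ArgS 𝕊 ∧ b ∈ ArgS 𝕊 ∧ (a, b) ∉ PairsS 𝕊

def compsS (𝕊 : Set (Set ℕ)) : Set (Set ℕ) :=
  {K | ∃ a ∈ ArgS 𝕊, K = {b ∈ ArgS 𝕊 | Relation.ReflTransGen (nopairs 𝕊) a b}}

noncomputable def sigmaMax (σ : Semantics) (n : ℕ) : ℕ :=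
  sSup {k | ∃ F : AF, F.A.card = n ∧ (σ F).ncard = k}

noncomputable def sigmaMaxCon (σ : Semantics) (n : ℕ) : ℕ :=
  sSup {k | ∃ F : AF, F.A.card = n ∧ AFConnected F ∧ (σ F).ncard = k}

noncomputable def sigmaMax2 (σ : Semantics) (n : ℕ) : ℕ :=
  sSup ({k | ∃ F : AF, F.A.card = n ∧ (σ F).ncard = k} \ {sigmaMax σ n})

def cfSet (𝕊 : Set (Set ℕ)) : Set (Set ℕ) :=
  {S | S ⊆ ArgS 𝕊 ∧ ∀ a ∈ S, ∀ b ∈ S, (a, b) ∈ PairsS 𝕊}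

def plusSet (𝕊 : Set (Set ℕ)) : Set (Set ℕ) :=
  {S | S ∈ cfSet 𝕊 ∧ ∀ T ∈ cfSet 𝕊, S ⊆ T → S = T}

def minusSet (𝕊 : Set (Set ℕ)) : Set (Set ℕ) := plusSet 𝕊 \ 𝕊

def Sig (σ : Semantics) : Set (Set (Set ℕ)) := {𝕊 | ∃ F : AF, σ F = 𝕊}

def cSig (σ : Semantics) : Set (Set (Set ℕ)) :=
  {𝕊 | ∃ F : AF, AFCompact σ F ∧ σ F = 𝕊}

def Pcon (σ : Semantics) (n : ℕ) : Set ℕ :=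
  {k | ∃ F : AF, AFCompact σ F ∧ AFConnected F ∧ F.A.card = n ∧ (σ F).ncard = k}

open Classical in
noncomputable def restrictAF (F : AF) (K : Set ℕ) : AF where
  A := F.A.filter (fun a => a ∈ K)
  R := {p | p ∈ F.R ∧ p.1 ∈ K ∧ p.2 ∈ K}
  R_sub := fun p hp => by
    have h := F.R_sub p hp.1
    simp only [Finset.mem_filter]
    exact ⟨⟨h.1, hp.2.1⟩, ⟨h.2, hp.2.2⟩⟩

def IsExclusionMapping (𝕊 : Set (Set ℕ)) (Rm : Set (ℕ × ℕ)) : Prop :=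
  ∃ f : Set ℕ → ℕ,
    (∀ S ∈ minusSet 𝕊, f S ∈ ArgS 𝕊 ∧ f S ∉ S) ∧
    Rm = {p | ∃ S ∈ minusSet 𝕊, p.1 ∈ S ∧ p.2 = f S ∧ p ∉ PairsS 𝕊}

def Independent (𝕊 : Set (Set ℕ)) : Prop :=
  ∃ Rm : Set (ℕ × ℕ), IsExclusionMapping 𝕊 Rm ∧
    (∀ a b, (a, b) ∈ Rm → (b, a) ∈ Rm → a = b) ∧
    ∀ S ∈ 𝕊, ∀ a ∈ ArgS 𝕊 \ S, ∃ s ∈ S, (s, a) ∉ Rm ∪ PairsS 𝕊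

def ConflictExplicit (σ : Semantics) (F : AF) : Prop :=
  ∀ a ∈ F.A, ∀ b ∈ F.A, (a, b) ∉ PairsS (σ F) → (a, b) ∈ F.R ∨ (b, a) ∈ F.R

noncomputable def canonicalCF (𝕊 : Set (Set ℕ)) (h : IsExtensionSet 𝕊) : AF where
  A := h.toFinset
  R := {p | p.1 ∈ ArgS 𝕊 ∧ p.2 ∈ ArgS 𝕊 ∧ p ∉ PairsS 𝕊}
  R_sub := fun p hp => by
    exact ⟨by first | exact (Set.Finite.mem_toFinset h).2 hp.1 | exact Set.Finite.mem_toFinset.2 hp.1,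
      by first | exact (Set.Finite.mem_toFinset h).2 hp.2.1 | exact Set.Finite.mem_toFinset.2 hp.2.1⟩


/-!
Take the conflict-free AF of `𝕊` (attack every pair that no member of `𝕊` contains) and delete
the attacks of the exclusion mapping. Since the mapping is antisymmetric, every non-pair keeps
at least one direction of attack, so the conflict-free sets are still exactly `𝕊^cf`, and the
stable extensions are maximal among them, i.e. lie in `𝕊⁺`. A member of `𝕊⁻` is not stable,
because the removed attacks are precisely those on its excluded argument; a member of `𝕊` is
stable by the defeat condition of independence. Every argument lies in some member of `𝕊`,
which gives compactness.
-/

lemma pairsS_swap {𝕊 : Set (Set ℕ)} {a b : ℕ} (h : (a, b) ∈ PairsS 𝕊) : (b, a) ∈ PairsS 𝕊 := by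
  obtain ⟨S, hS, ha, hb⟩ := h
  exact ⟨S, hS, hb, ha⟩

lemma mem_cfSet_of_mem {𝕊 : Set (Set ℕ)} {S : Set ℕ} (hS : S ∈ 𝕊) : S ∈ cfSet 𝕊 :=
  ⟨Set.subset_sUnion_of_mem hS, fun _ ha _ hb => ⟨S, hS, ha, hb⟩⟩

lemma IsExclusionMapping.not_mem_self {𝕊 : Set (Set ℕ)} {Rm : Set (ℕ × ℕ)}
    (h : IsExclusionMapping 𝕊 Rm) (a : ℕ) : (a, a) ∉ Rm := by
  obtain ⟨f, hf, rfl⟩ := h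
  rintro ⟨S, hS, haS, hfa, -⟩
  exact (hf S hS).2 (hfa ▸ haS)

lemma IsExclusionMapping.asymm_of_antisymm {𝕊 : Set (Set ℕ)} {Rm : Set (ℕ × ℕ)}
    (h : IsExclusionMapping 𝕊 Rm) (hanti : ∀ a b, (a, b) ∈ Rm → (b, a) ∈ Rm → a = b) :
    ∀ a b, (a, b) ∈ Rm → (b, a) ∉ Rm := fun a b hab hba => by
  obtain rfl := hanti a b hab hba
  exact h.not_mem_self a hab

noncomputable def exclusionAF (𝕊 : Set (Set ℕ)) (hext : IsExtensionSet 𝕊) (Rm : Set (ℕ × ℕ)) :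
    AF :=
  { canonicalCF 𝕊 hext with
    R := (canonicalCF 𝕊 hext).R \ Rm
    R_sub := fun p hp => (canonicalCF 𝕊 hext).R_sub p hp.1 }

namespace exclusionAF

variable {𝕊 : Set (Set ℕ)} (hext : IsExtensionSet 𝕊) {Rm : Set (ℕ × ℕ)}

lemma mem_A {a : ℕ} : a ∈ (exclusionAF 𝕊 hext Rm).A ↔ a ∈ ArgS 𝕊 :=
  hext.mem_toFinset

lemma mem_R {a b : ℕ} :
    (a, b) ∈ (exclusionAF 𝕊 hext Rm).R ↔
      a ∈ ArgS 𝕊 ∧ b ∈ ArgS 𝕊 ∧ (a, b) ∉ PairsS 𝕊 ∧ (a, b) ∉ Rm := by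
  simp only [exclusionAF, canonicalCF, Set.mem_sdiff, Set.mem_ofPred_eq, and_assoc]

lemma cfSet_subset_cf : cfSet 𝕊 ⊆ (exclusionAF 𝕊 hext Rm).cf := fun _ ⟨hSArg, hpairs⟩ =>
  ⟨fun _ ha => (mem_A hext).2 (hSArg ha),
    fun a ha b hb hR => ((mem_R hext).1 hR).2.2.1 (hpairs a ha b hb)⟩

lemma cf_eq (hasymm : ∀ a b, (a, b) ∈ Rm → (b, a) ∉ Rm) :
    (exclusionAF 𝕊 hext Rm).cf = cfSet 𝕊 := by
  refine Set.Subset.antisymm ?_ (cfSet_subset_cf hext)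
  rintro S ⟨hSF, hconf⟩
  have hSA : S ⊆ ArgS 𝕊 := fun a ha => (mem_A hext).1 (hSF ha)
  refine ⟨hSA, fun a ha b hb => by_contra fun hab => ?_⟩
  have hba : (b, a) ∉ PairsS 𝕊 := fun h => hab (pairsS_swap h)
  have hab_excl : (a, b) ∈ Rm :=
    by_contra fun h => hconf a ha b hb ((mem_R hext).2 ⟨hSA ha, hSA hb, hab, h⟩)
  have hba_excl : (b, a) ∈ Rm :=
    by_contra fun h => hconf b hb a ha ((mem_R hext).2 ⟨hSA hb, hSA ha, hba, h⟩)
  exact hasymm a b hab_excl hba_excl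

lemma stb_subset_plusSet (hasymm : ∀ a b, (a, b) ∈ Rm → (b, a) ∉ Rm) :
    (exclusionAF 𝕊 hext Rm).stb ⊆ plusSet 𝕊 := by
  rintro E ⟨hEcf, hEattacks⟩
  rw [cf_eq hext hasymm] at hEcf
  refine ⟨hEcf, fun T hT hET => hET.antisymm fun t ht => by_contra fun htE => ?_⟩
  obtain ⟨s, hsE, hst⟩ := hEattacks t ((mem_A hext).2 (hT.1 ht)) htE
  exact ((mem_R hext).1 hst).2.2.1 (hT.2 s (hET hsE) t ht)

lemma stb_subset (hexcl : IsExclusionMapping 𝕊 Rm) (hasymm : ∀ a b, (a, b) ∈ Rm → (b, a) ∉ Rm) :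
    (exclusionAF 𝕊 hext Rm).stb ⊆ 𝕊 := by
  obtain ⟨f, hf, hRm⟩ := hexcl
  intro E hE
  by_contra hE𝕊
  have hEminus : E ∈ minusSet 𝕊 := ⟨stb_subset_plusSet hext hasymm hE, hE𝕊⟩
  obtain ⟨hfArg, hfE⟩ := hf E hEminus
  obtain ⟨s, hsE, hsf⟩ := hE.2 (f E) ((mem_A hext).2 hfArg) hfE
  obtain ⟨-, -, hnotpair, hnotexcl⟩ := (mem_R hext).1 hsf
  exact hnotexcl (hRm ▸ ⟨E, hEminus, hsE, rfl, hnotpair⟩)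

lemma subset_stb (hdefeat : ∀ S ∈ 𝕊, ∀ a ∈ ArgS 𝕊 \ S, ∃ s ∈ S, (s, a) ∉ Rm ∪ PairsS 𝕊) :
    𝕊 ⊆ (exclusionAF 𝕊 hext Rm).stb := by
  intro S hS
  refine ⟨cfSet_subset_cf hext (mem_cfSet_of_mem hS), fun a haA haS => ?_⟩
  have haArg := (mem_A hext).1 haA
  obtain ⟨s, hsS, hs⟩ := hdefeat S hS a ⟨haArg, haS⟩
  exact ⟨s, hsS, (mem_R hext).2 ⟨Set.subset_sUnion_of_mem hS hsS, haArg, fun h => hs (Or.inr h), fun h => hs (Or.inl h)⟩⟩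

end exclusionAF

theorem independent_implies_compactly_stb_realizable_general (𝕊 : Set (Set ℕ))
    (hext : IsExtensionSet 𝕊) (hind : Independent 𝕊) :
    ∃ F : AF, AFCompact AF.stb F ∧ AF.stb F = 𝕊 := by
  obtain ⟨Rm, hexcl, hanti, hdefeat⟩ := hind
  have hasymm := hexcl.asymm_of_antisymm hanti
  have hstb : (exclusionAF 𝕊 hext Rm).stb = 𝕊 :=
    (exclusionAF.stb_subset hext hexcl hasymm).antisymm (exclusionAF.subset_stb hext hdefeat)
  refine ⟨exclusionAF 𝕊 hext Rm, fun a ha => ?_, hstb⟩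
  obtain ⟨S, hS, haS⟩ := (exclusionAF.mem_A hext).1 ha
  exact ⟨S, hstb.symm ▸ hS, haS⟩

theorem independent_implies_compactly_stb_realizable (𝕊 : Set (Set ℕ))
    (hext : IsExtensionSet 𝕊) (hind : Independent 𝕊) (hsub : 𝕊 ⊆ plusSet 𝕊) :
    ∃ F : AF, AFCompact AF.stb F ∧ AF.stb F = 𝕊 :=
  independent_implies_compactly_stb_realizable_general 𝕊 hext hind
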